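/- Let (Ω, 𝓐, P) be a probability space with a filtration (𝓕_s)_{s∈ℕ}, let L ≥ 0 and M ≥ 0 be real constants, and set Γ = 1 + L·M. Fix natural numbers t and T with 1 ≤ t < T and an integer N ≥ 2. For each i ∈ {2,…,N} let (dⁱ_s)_{t ≤ s ≤ T} be a nonnegative, integrable process adapted to (𝓕_s), and for each s with t ≤ s < T let Aⁱ_s be an event belonging to 𝓕_{s+1}, such that P-almost surely: (a) dⁱ_{s+1} ≤ dⁱ_s + M·1_{Aⁱ_s}, and (b) P(Aⁱ_s | 𝓕_s) ≤ L·dⁱ_s. Define S_s = ∑_{i=2}^{N} dⁱ_s for t ≤ s ≤ T. Then for every real ε > 0, P-almost surely P(S_T ≤ ε | 𝓕_t) ≥ 1 − (Γ^{T−t}/ε)·S_t. -/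

import Mathlib

/-!
Conditioning the increment bound on `ℱ s` and using the Lipschitz mismatch bound gives
`E[dⁱ_{s+1} | ℱ s] ≤ dⁱ_s + M·L·dⁱ_s`, so summing over `i`, `E[S_{s+1} | ℱ s] ≤ Γ S_s`.
By the tower property `E[S_T | ℱ t] ≤ Γ^{T-t} S_t`, and the conditional Markov inequality
`P(S_T > ε | ℱ t) ≤ E[S_T | ℱ t] / ε` for the nonnegative `S_T` finishes the proof.
-/

open MeasureTheory Finset

namespace MeasureTheory

variable {Ω : Type*} {m m₀ : MeasurableSpace Ω} {μ : Measure Ω}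

theorem condExp_le_mul_of_le_add_indicator [IsFiniteMeasure μ] (hm : m ≤ m₀)
    {X Y : Ω → ℝ} {A : Set Ω} {L M : ℝ} (hM : 0 ≤ M)
    (hX : StronglyMeasurable[m] X) (hXi : Integrable X μ) (hYi : Integrable Y μ)
    (hA : MeasurableSet A)
    (hYX : ∀ᵐ ω ∂μ, Y ω ≤ X ω + M * A.indicator (fun _ => (1 : ℝ)) ω)
    (hAX : μ[A.indicator (fun _ => (1 : ℝ)) | m] ≤ᵐ[μ] fun ω => L * X ω) :
    μ[Y | m] ≤ᵐ[μ] fun ω => (1 + L * M) * X ω := by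
  set χ := A.indicator (fun _ => (1 : ℝ))
  have hAi : Integrable χ μ := (integrable_const 1).indicator hA
  have hsplit : μ[X + M • χ | m] =ᵐ[μ] X + M • μ[χ | m] :=
    (condExp_add hXi (hAi.smul M) m).trans <| by
      rw [condExp_of_stronglyMeasurable hm hX hXi]
      exact Filter.EventuallyEq.rfl.add (condExp_smul M χ m)
  filter_upwards [condExp_mono (m := m) (g := X + M • χ) hYi (hXi.add (hAi.smul M)) hYX,
    hsplit, hAX] with ω hY hω hAω
  simp only [hω, Pi.add_apply, Pi.smul_apply, smul_eq_mul] at hY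
  nlinarith [mul_le_mul_of_nonneg_left hAω hM]

theorem condExp_sum_le_mul_sum {ι : Type*} (s : Finset ι) {X Y : ι → Ω → ℝ} {c : ℝ}
    (hYi : ∀ i ∈ s, Integrable (Y i) μ) (hYX : ∀ i ∈ s, μ[Y i | m] ≤ᵐ[μ] fun ω => c * X i ω) :
    μ[fun ω => ∑ i ∈ s, Y i ω | m] ≤ᵐ[μ] fun ω => c * ∑ i ∈ s, X i ω := by
  filter_upwards [condExp_finsetSum hYi m, (Filter.eventually_all_finset s).2 hYX]
    with ω hsum hle
  rw [← Finset.sum_fn, hsum, Finset.sum_apply, Finset.mul_sum]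
  exact sum_le_sum hle

theorem condExp_le_pow_mul_of_condExp_succ_le [IsFiniteMeasure μ] (ℱ : Filtration ℕ m₀)
    {X : ℕ → Ω → ℝ} {Γ : ℝ} (hΓ : 0 ≤ Γ) {t T : ℕ} (htT : t ≤ T)
    (hXt : StronglyMeasurable[ℱ t] (X t)) (hXi : ∀ s, t ≤ s → s ≤ T → Integrable (X s) μ)
    (hstep : ∀ s, t ≤ s → s < T → μ[X (s + 1) | ℱ s] ≤ᵐ[μ] fun ω => Γ * X s ω) :
    μ[X T | ℱ t] ≤ᵐ[μ] fun ω => Γ ^ (T - t) * X t ω := by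
  revert hXi hstep
  induction T, htT using Nat.le_induction with
  | base =>
    intro hXi _
    rw [condExp_of_stronglyMeasurable (ℱ.le t) hXt (hXi t le_rfl le_rfl)]
    filter_upwards with ω
    simp
  | succ n htn ih =>
    intro hXi hstep
    have ihn := ih (fun s h₁ h₂ => hXi s h₁ (h₂.trans n.le_succ))
      (fun s h₁ h₂ => hstep s h₁ (h₂.trans n.lt_succ_self))
    filter_upwards [(condExp_condExp_of_le (f := X (n + 1)) (ℱ.mono htn) (ℱ.le n)).symm,
      condExp_mono (integrable_condExp (f := X (n + 1))) ((hXi n htn n.le_succ).const_mul Γ)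
        (hstep n htn n.lt_succ_self),
      condExp_smul Γ (X n) (ℱ t), ihn] with ω htower hmono hsmul hn
    calc μ[X (n + 1) | ℱ t] ω = μ[μ[X (n + 1) | ℱ n] | ℱ t] ω := htower
      _ ≤ μ[fun ω => Γ * X n ω | ℱ t] ω := hmono
      _ = Γ * μ[X n | ℱ t] ω := hsmul
      _ ≤ Γ * (Γ ^ (n - t) * X t ω) := mul_le_mul_of_nonneg_left hn hΓ
      _ = Γ ^ (n + 1 - t) * X t ω := by rw [Nat.sub_add_comm htn, pow_succ]; ring

theorem one_sub_condExp_div_le_condExp_indicator_le [IsFiniteMeasure μ] (hm : m ≤ m₀)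
    {Y : Ω → ℝ} (hY : Measurable Y) (hYi : Integrable Y μ) (hY0 : 0 ≤ᵐ[μ] Y)
    {ε : ℝ} (hε : 0 < ε) :
    ∀ᵐ ω ∂μ, 1 - μ[Y | m] ω / ε ≤ μ[{ω | Y ω ≤ ε}.indicator (fun _ => (1 : ℝ)) | m] ω := by
  set B := {ω | Y ω ≤ ε}
  have hBi : Integrable (B.indicator fun _ => (1 : ℝ)) μ :=
    (integrable_const 1).indicator (hY measurableSet_Iic)
  have hpt : (fun _ => (1 : ℝ)) - ε⁻¹ • Y ≤ᵐ[μ] B.indicator fun _ => 1 := by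
    filter_upwards [hY0] with ω hω
    simp only [Pi.sub_apply, Pi.smul_apply, smul_eq_mul, Set.indicator_apply, B, Set.mem_ofPred_eq]
    split_ifs with h
    · exact sub_le_self _ (mul_nonneg (inv_nonneg.2 hε.le) hω)
    · rw [sub_nonpos, le_inv_mul_iff₀ hε]
      linarith
  have hlin : μ[(fun _ => (1 : ℝ)) - ε⁻¹ • Y | m] =ᵐ[μ] (fun _ => 1) - ε⁻¹ • μ[Y | m] :=
    (condExp_sub (integrable_const 1) (hYi.smul ε⁻¹) m).trans <| by
      rw [condExp_const hm]
      exact Filter.EventuallyEq.rfl.sub (condExp_smul ε⁻¹ Y m)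
  filter_upwards [condExp_mono ((integrable_const 1).sub (hYi.smul _)) hBi hpt, hlin]
    with ω hmono hω
  rw [hω] at hmono
  simpa [div_eq_inv_mul] using hmono

end MeasureTheory

theorem early_consistency_foreshadows_final_consistency_general
    {Ω : Type*} {𝓐 : MeasurableSpace Ω} {P : Measure Ω} [IsProbabilityMeasure P]
    (ℱ : Filtration ℕ 𝓐)
    (L M : ℝ) (hL : 0 ≤ L) (hM : 0 ≤ M)
    (Γ : ℝ) (hΓ : Γ = 1 + L * M)
    (t T : ℕ) (htT : t < T)
    (N : ℕ)
    (d : ℕ → ℕ → Ω → ℝ) (A : ℕ → ℕ → Set Ω)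
    (hd_meas : ∀ i ∈ Finset.Icc 2 N, ∀ s, t ≤ s → s ≤ T → StronglyMeasurable[ℱ s] (d i s))
    (hd_nonneg : ∀ i ∈ Finset.Icc 2 N, ∀ s, t ≤ s → s ≤ T → 0 ≤ᵐ[P] d i s)
    (hd_int : ∀ i ∈ Finset.Icc 2 N, ∀ s, t ≤ s → s ≤ T → Integrable (d i s) P)
    (hA_meas : ∀ i ∈ Finset.Icc 2 N, ∀ s, t ≤ s → s < T → MeasurableSet[ℱ (s + 1)] (A i s))
    (hbounded : ∀ i ∈ Finset.Icc 2 N, ∀ s, t ≤ s → s < T →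
      ∀ᵐ ω ∂P, d i (s + 1) ω ≤ d i s ω + M * (A i s).indicator (fun _ => (1 : ℝ)) ω)
    (hlip : ∀ i ∈ Finset.Icc 2 N, ∀ s, t ≤ s → s < T →
      P[(A i s).indicator (fun _ => (1 : ℝ)) | ℱ s] ≤ᵐ[P] fun ω => L * d i s ω)
    (S : ℕ → Ω → ℝ) (hS : ∀ s, S s = fun ω => ∑ i ∈ Finset.Icc 2 N, d i s ω)
    (ε : ℝ) (hε : 0 < ε) :
    ∀ᵐ ω ∂P,
      1 - (Γ ^ (T - t) / ε) * S t ω ≤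
        (P[({ω | S T ω ≤ ε}).indicator (fun _ => (1 : ℝ)) | ℱ t]) ω := by
  subst hΓ
  have hS_int : ∀ s, t ≤ s → s ≤ T → Integrable (S s) P := fun s h₁ h₂ => by
    rw [hS]; exact integrable_finsetSum _ fun i hi => hd_int i hi s h₁ h₂
  have hS_meas : ∀ s, t ≤ s → s ≤ T → StronglyMeasurable[ℱ s] (S s) := fun s h₁ h₂ => by
    rw [hS]; exact Finset.stronglyMeasurable_fun_sum _ fun i hi => hd_meas i hi s h₁ h₂
  have hST_nonneg : 0 ≤ᵐ[P] S T := by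
    filter_upwards [(Filter.eventually_all_finset _).2 fun i hi => hd_nonneg i hi T htT.le le_rfl]
      with ω hω
    rw [hS]; exact sum_nonneg hω
  have hstep : ∀ s, t ≤ s → s < T → P[S (s + 1) | ℱ s] ≤ᵐ[P] fun ω => (1 + L * M) * S s ω := by
    intro s h₁ h₂
    rw [hS, hS]
    exact condExp_sum_le_mul_sum (Y := fun i => d i (s + 1)) _
      (fun i hi => hd_int i hi _ (h₁.trans s.le_succ) h₂) fun i hi =>
        condExp_le_mul_of_le_add_indicator (ℱ.le s) hM (hd_meas i hi s h₁ h₂.le)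
          (hd_int i hi s h₁ h₂.le) (hd_int i hi _ (h₁.trans s.le_succ) h₂)
          (ℱ.le _ _ (hA_meas i hi s h₁ h₂)) (hbounded i hi s h₁ h₂) (hlip i hi s h₁ h₂)
  filter_upwards [condExp_le_pow_mul_of_condExp_succ_le ℱ (add_nonneg zero_le_one (mul_nonneg hL hM))
      htT.le (hS_meas t le_rfl htT.le) hS_int hstep,
    one_sub_condExp_div_le_condExp_indicator_le (ℱ.le t)
      ((hS_meas T htT.le le_rfl).mono (ℱ.le T)).measurable (hS_int T htT.le le_rfl)
      hST_nonneg hε] with ω hdrift hmarkov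
  calc 1 - (1 + L * M) ^ (T - t) / ε * S t ω = 1 - (1 + L * M) ^ (T - t) * S t ω / ε := by ring
    _ ≤ 1 - P[S T | ℱ t] ω / ε := by gcongr
    _ ≤ _ := hmarkov

/-- Theorem 1 of the paper: under bounded-increment and Lipschitz-mismatch
assumptions on the pairwise distance processes, early consistency `S t`
lower-bounds the conditional probability of final consistency `S T ≤ ε`. -/
theorem early_consistency_foreshadows_final_consistency
    {Ω : Type*} {𝓐 : MeasurableSpace Ω} {P : Measure Ω} [IsProbabilityMeasure P]
    (ℱ : Filtration ℕ 𝓐)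
    (L M : ℝ) (hL : 0 ≤ L) (hM : 0 ≤ M)
    (Γ : ℝ) (hΓ : Γ = 1 + L * M)
    (t T : ℕ) (ht : 1 ≤ t) (htT : t < T)
    (N : ℕ) (hN : 2 ≤ N)
    (d : ℕ → ℕ → Ω → ℝ) (A : ℕ → ℕ → Set Ω)
    (hd_meas : ∀ i ∈ Finset.Icc 2 N, ∀ s, t ≤ s → s ≤ T → StronglyMeasurable[ℱ s] (d i s))
    (hd_nonneg : ∀ i ∈ Finset.Icc 2 N, ∀ s, t ≤ s → s ≤ T → 0 ≤ᵐ[P] d i s)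
    (hd_int : ∀ i ∈ Finset.Icc 2 N, ∀ s, t ≤ s → s ≤ T → Integrable (d i s) P)
    (hA_meas : ∀ i ∈ Finset.Icc 2 N, ∀ s, t ≤ s → s < T → MeasurableSet[ℱ (s + 1)] (A i s))
    (hbounded : ∀ i ∈ Finset.Icc 2 N, ∀ s, t ≤ s → s < T →
      ∀ᵐ ω ∂P, d i (s + 1) ω ≤ d i s ω + M * (A i s).indicator (fun _ => (1 : ℝ)) ω)
    (hlip : ∀ i ∈ Finset.Icc 2 N, ∀ s, t ≤ s → s < T →
      P[(A i s).indicator (fun _ => (1 : ℝ)) | ℱ s] ≤ᵐ[P] fun ω => L * d i s ω)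
    (S : ℕ → Ω → ℝ) (hS : ∀ s, S s = fun ω => ∑ i ∈ Finset.Icc 2 N, d i s ω)
    (ε : ℝ) (hε : 0 < ε) :
    ∀ᵐ ω ∂P,
      1 - (Γ ^ (T - t) / ε) * S t ω ≤
        (P[({ω | S T ω ≤ ε}).indicator (fun _ => (1 : ℝ)) | ℱ t]) ω :=
  early_consistency_foreshadows_final_consistency_general ℱ L M hL hM Γ hΓ t T htT N d A hd_meas
    hd_nonneg hd_int hA_meas hbounded hlip S hS ε hε
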